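/- Assume 0 < p, q < 1, 0 < p_s, p_s^e < 1, and 0 < p_α ≤ 1. Then the marginal confidentiality terms at the eavesdropper satisfy ∑_{a∈{0,1}} π(0,a,1) = p q (1 − p_α p_s^e) / ((p+q)(p+q + p_α p_s^e (1−p−q))) and ∑_{a∈{0,1}} π(1,a,0) = p q (1 − p_α p_s^e) / ((p+q)(p+q + p_α p_s^e (1−p−q))). -/
import Mathlib


open Matrix
set_option maxHeartbeats 1600000000

noncomputable section

/-- λ11 = p_α p_s p_s^e -/
def l11 (ps pse pa : ℝ) : ℝ := pa * ps * pse
/-- λ10 = p_α p_s (1 − p_s^e) -/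
def l10 (ps pse pa : ℝ) : ℝ := pa * ps * (1 - pse)
/-- λ01 = p_α (1 − p_s) p_s^e -/
def l01 (ps pse pa : ℝ) : ℝ := pa * (1 - ps) * pse
/-- λ00 = p_α (1 − p_s)(1 − p_s^e) + (1 − p_α) -/
def l00 (ps pse pa : ℝ) : ℝ := pa * (1 - ps) * (1 - pse) + (1 - pa)
/-- P_A = λ11 + λ10 -/
def PA (ps pse pa : ℝ) : ℝ := l11 ps pse pa + l10 ps pse pa
/-- P_B = λ11 + λ01 -/
def PB (ps pse pa : ℝ) : ℝ := l11 ps pse pa + l01 ps pse pa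

/-- Source transition matrix Q. -/
def Qm (p q : ℝ) : Matrix (Fin 2) (Fin 2) ℝ := !![1 - p, p; q, 1 - q]

/-- Stationary distribution of the source: v_0 = q/(p+q), v_1 = p/(p+q). -/
def vstat (p q : ℝ) : Fin 2 → ℝ := ![q / (p + q), p / (p + q)]

/-- T1(x,a,b) = δ(a,b) v_a λ11 [(I − λ00 Q)⁻¹]_{a,x} -/
def T1 (p q ps pse pa : ℝ) (x a b : Fin 2) : ℝ :=
  (if a = b then (1 : ℝ) else 0) * vstat p q a * l11 ps pse pa *
    ((1 - l00 ps pse pa • Qm p q)⁻¹ a x)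

/-- T2(x,a,b) = v_b λ10 P_B [Q (I − (1−P_B) Q)⁻¹]_{b,a} [(I − λ00 Q)⁻¹]_{a,x} -/
def T2 (p q ps pse pa : ℝ) (x a b : Fin 2) : ℝ :=
  vstat p q b * l10 ps pse pa * PB ps pse pa *
    ((Qm p q * (1 - (1 - PB ps pse pa) • Qm p q)⁻¹) b a) *
    ((1 - l00 ps pse pa • Qm p q)⁻¹ a x)

/-- T3(x,a,b) = v_a λ01 P_A [Q (I − (1−P_A) Q)⁻¹]_{a,b} [(I − λ00 Q)⁻¹]_{b,x} -/
def T3 (p q ps pse pa : ℝ) (x a b : Fin 2) : ℝ :=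
  vstat p q a * l01 ps pse pa * PA ps pse pa *
    ((Qm p q * (1 - (1 - PA ps pse pa) • Qm p q)⁻¹) a b) *
    ((1 - l00 ps pse pa • Qm p q)⁻¹ b x)

/-- π(x,a,b) = T1 + T2 + T3 -/
def piDist (p q ps pse pa : ℝ) (x a b : Fin 2) : ℝ :=
  T1 p q ps pse pa x a b + T2 p q ps pse pa x a b + T3 p q ps pse pa x a b


lemma invQ (p q c : ℝ) (h1 : (1:ℝ) - c ≠ 0) (h2 : (1:ℝ) - c*(1-p-q) ≠ 0) :
    (1 - c • Qm p q)⁻¹ =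
      ((1-c)*(1-c*(1-p-q)))⁻¹ • !![1 - c*(1-q), c*p; c*q, 1 - c*(1-p)] := by
  apply Matrix.inv_eq_right_inv
  ext i j
  fin_cases i <;> fin_cases j <;>
    simp [Matrix.mul_apply, Fin.sum_univ_two, Qm, Matrix.smul_apply, Matrix.one_apply,
      Matrix.sub_apply] <;>
    field_simp <;> ring

lemma sum_div (a1 a2 a3 pq d1 d2 d3 R S : ℝ)
    (hpq : pq ≠ 0) (h1 : d1 ≠ 0) (h2 : d2 ≠ 0) (h3 : d3 ≠ 0) (hS : S ≠ 0)
    (hkey : (a1 * d2 * d3 + a2 * d2 + a3 * d3) * S = R * (pq * d1 * d2 * d3)) :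
    pq⁻¹ * d1⁻¹ * (a1 + a2 * d3⁻¹ + a3 * d2⁻¹) = R / S := by
  field_simp
  linear_combination hkey

/-- Marginal confidentiality terms at the eavesdropper. -/
theorem stmt14 (p q ps pse pa : ℝ)
    (hp0 : 0 < p) (hp1 : p < 1) (hq0 : 0 < q) (hq1 : q < 1)
    (hs0 : 0 < ps) (hs1 : ps < 1) (he0 : 0 < pse) (he1 : pse < 1)
    (ha0 : 0 < pa) (ha1 : pa ≤ 1) :
    (∑ a : Fin 2, piDist p q ps pse pa 0 a 1 =
      p * q * (1 - pa * pse) /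
        ((p + q) * (p + q + pa * pse * (1 - p - q)))) ∧
    (∑ a : Fin 2, piDist p q ps pse pa 1 a 0 =
      p * q * (1 - pa * pse) /
        ((p + q) * (p + q + pa * pse * (1 - p - q)))) := by
  have hpq : 0 < p + q := by linarith
  have hc00 : l00 ps pse pa < 1 := by
    unfold l00
    nlinarith [mul_pos ha0 (show (0:ℝ) < ps*(1-pse)+pse by nlinarith)]
  have hc00' : 0 ≤ l00 ps pse pa := by
    unfold l00
    nlinarith [mul_nonneg (mul_nonneg ha0.le (by linarith : (0:ℝ) ≤ 1-ps))
      (by linarith : (0:ℝ) ≤ 1-pse)]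
  have hA : 1 - PA ps pse pa < 1 := by unfold PA l11 l10; nlinarith
  have hA' : 0 ≤ 1 - PA ps pse pa := by unfold PA l11 l10; nlinarith
  have hB : 1 - PB ps pse pa < 1 := by unfold PB l11 l01; nlinarith
  have hB' : 0 ≤ 1 - PB ps pse pa := by unfold PB l11 l01; nlinarith
  have key : ∀ c : ℝ, 0 ≤ c → c < 1 →
      ((1:ℝ) - c ≠ 0) ∧ ((1:ℝ) - c*(1-p-q) ≠ 0) := by
    intro c h0 h1
    constructor
    · nlinarith
    · rcases le_or_gt (1 - p - q) 0 with h | h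
      · nlinarith
      · nlinarith
  obtain ⟨h1a, h2a⟩ := key _ hc00' hc00
  obtain ⟨h1b, h2b⟩ := key _ hA' hA
  obtain ⟨h1c, h2c⟩ := key _ hB' hB
  have hden : (p + q) * (p + q + pa * pse * (1 - p - q)) ≠ 0 := by
    have hlt : pa * pse < 1 := by nlinarith
    have : 0 < p + q + pa * pse * (1 - p - q) := by
      nlinarith [mul_pos hpq (show (0:ℝ) < 1 - pa*pse by linarith), mul_pos ha0 he0]
    positivity
  -- generalize to composite variables u = pa*ps, e = pa*pse, w = pa*ps*pse
  obtain ⟨u, hu⟩ : ∃ u, pa * ps = u := ⟨_, rfl⟩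
  obtain ⟨e, he⟩ : ∃ e, pa * pse = e := ⟨_, rfl⟩
  obtain ⟨w, hw⟩ : ∃ w, pa * ps * pse = w := ⟨_, rfl⟩
  have e11 : l11 ps pse pa = w := by rw [← hw]; rfl
  have e10 : l10 ps pse pa = u - w := by rw [← hu, ← hw]; unfold l10; ring
  have e01 : l01 ps pse pa = e - w := by rw [← he, ← hw]; unfold l01; ring
  have e00 : l00 ps pse pa = 1 - u - e + w := by rw [← hu, ← he, ← hw]; unfold l00; ring
  have ePA : PA ps pse pa = u := by rw [← hu]; unfold PA l11 l10; ring
  have ePB : PB ps pse pa = e := by rw [← he]; unfold PB l11 l01; ring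
  rw [e00] at h1a h2a
  rw [ePA] at h1b h2b
  rw [ePB] at h1c h2c
  rw [he] at hden
  rw [he]
  have hU : u ≠ 0 := by rw [← hu]; positivity
  have hE : e ≠ 0 := by rw [← he]; positivity
  have hUE : u + e - w ≠ 0 := by
    have : u + e - w = 1 - (1 - u - e + w) := by ring
    rw [this]; exact h1a
  have hQ4 : p + q + e * (1 - p - q) ≠ 0 := by
    intro h0
    exact hden (by rw [h0, mul_zero])
  have hd1 : ((1 - (1 - u - e + w)) * (1 - (1 - u - e + w) * (1 - p - q))) ≠ 0 :=
    mul_ne_zero h1a h2a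
  have hd2 : ((1 - (1 - u)) * (1 - (1 - u) * (1 - p - q))) ≠ 0 := mul_ne_zero h1b h2b
  have hd3 : ((1 - (1 - e)) * (1 - (1 - e) * (1 - p - q))) ≠ 0 := mul_ne_zero h1c h2c
  constructor
  · simp only [piDist, T1, T2, T3, Fin.sum_univ_two, e11, e10, e01, e00, ePA, ePB,
      invQ p q _ h1a h2a, invQ p q _ h1b h2b, invQ p q _ h1c h2c]
    simp only [vstat, Qm, Matrix.mul_apply, Fin.sum_univ_two, Matrix.of_apply,
      Matrix.smul_apply, Matrix.cons_val', Matrix.cons_val_zero, Matrix.cons_val_one,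
      Matrix.head_cons, Matrix.head_fin_const, Matrix.empty_val', Matrix.cons_val_fin_one,
      smul_eq_mul, if_true, if_false, Fin.isValue, one_ne_zero, zero_ne_one, ite_true,
      ite_false, reduceIte]
    refine Eq.trans ?_ (sum_div
      (p * w * ((1 - u - e + w) * q))
      (p * (u - w) * e *
        ((q * (1 - (1 - e) * (1 - q)) + (1 - q) * ((1 - e) * q)) *
            (1 - (1 - u - e + w) * (1 - q)) +
          (q * ((1 - e) * p) + (1 - q) * (1 - (1 - e) * (1 - p))) * ((1 - u - e + w) * q)))
      ((e - w) * u * ((1 - u - e + w) * q) *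
        (q * ((1 - p) * ((1 - u) * p) + p * (1 - (1 - u) * (1 - p))) +
          p * (q * ((1 - u) * p) + (1 - q) * (1 - (1 - u) * (1 - p)))))
      (p + q)
      ((1 - (1 - u - e + w)) * (1 - (1 - u - e + w) * (1 - p - q)))
      ((1 - (1 - u)) * (1 - (1 - u) * (1 - p - q)))
      ((1 - (1 - e)) * (1 - (1 - e) * (1 - p - q)))
      (p * q * (1 - e))
      ((p + q) * (p + q + e * (1 - p - q)))
      hpq.ne' hd1 hd2 hd3 hden (by ring))
    ring
  · simp only [piDist, T1, T2, T3, Fin.sum_univ_two, e11, e10, e01, e00, ePA, ePB,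
      invQ p q _ h1a h2a, invQ p q _ h1b h2b, invQ p q _ h1c h2c]
    simp only [vstat, Qm, Matrix.mul_apply, Fin.sum_univ_two, Matrix.of_apply,
      Matrix.smul_apply, Matrix.cons_val', Matrix.cons_val_zero, Matrix.cons_val_one,
      Matrix.head_cons, Matrix.head_fin_const, Matrix.empty_val', Matrix.cons_val_fin_one,
      smul_eq_mul, if_true, if_false, Fin.isValue, one_ne_zero, zero_ne_one, ite_true,
      ite_false, reduceIte]
    refine Eq.trans ?_ (sum_div
      (q * w * ((1 - u - e + w) * p))
      (q * (u - w) * e *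
        (((1 - p) * (1 - (1 - e) * (1 - q)) + p * ((1 - e) * q)) * ((1 - u - e + w) * p) +
          ((1 - p) * ((1 - e) * p) + p * (1 - (1 - e) * (1 - p))) *
            (1 - (1 - u - e + w) * (1 - p))))
      ((e - w) * u * ((1 - u - e + w) * p) *
        (q * ((1 - p) * (1 - (1 - u) * (1 - q)) + p * ((1 - u) * q)) +
          p * (q * (1 - (1 - u) * (1 - q)) + (1 - q) * ((1 - u) * q))))
      (p + q)
      ((1 - (1 - u - e + w)) * (1 - (1 - u - e + w) * (1 - p - q)))
      ((1 - (1 - u)) * (1 - (1 - u) * (1 - p - q)))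
      ((1 - (1 - e)) * (1 - (1 - e) * (1 - p - q)))
      (p * q * (1 - e))
      ((p + q) * (p + q + e * (1 - p - q)))
      hpq.ne' hd1 hd2 hd3 hden (by ring))
    ring
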